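/- For every PDL⁻ (identity-free PDL) formula φ: φ is valid on GRELsfinlin (i.e., ⟦φ⟧ˢ = W for every generalized structure S whose universal relation is a finite strict linear order) if and only if φ is derivable in the Hilbert system H⁻. -/

import Mathlib

/-! Statement 5: soundness and completeness of the Hilbert system `H⁻` for
identity-free PDL with respect to GRELsfinlin (finite strict linear orders). -/

/-- A generalized structure over term variables `A` and formula variables `P`,
with universe `W`. -/
structure GStruct (A P W : Type) where
  U : W → W → Prop
  rel : A → W → W → Prop
  rel_sub : ∀ a x y, rel a x y → U x y
  val : P → W → Prop

/-- The universal relation is a finite linear order (on a nonempty finite universe). -/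
def FinLin {A P W : Type} (S : GStruct A P W) : Prop :=
  Nonempty W ∧ Finite W ∧ (∀ x, S.U x x) ∧
    (∀ x y z, S.U x y → S.U y z → S.U x z) ∧
    (∀ x y, S.U x y → S.U y x → x = y) ∧ (∀ x y, S.U x y ∨ S.U y x)

/-- The universal relation is a finite strict linear order
(on a nonempty finite universe). -/
def SFinLin {A P W : Type} (S : GStruct A P W) : Prop :=
  Nonempty W ∧ Finite W ∧ (∀ x, ¬ S.U x x) ∧
    (∀ x y z, S.U x y → S.U y z → S.U x z) ∧
    (∀ x y, x ≠ y → S.U x y ∨ S.U y x)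
mutual
  /-- Formulas of identity-free PDL (PDL⁻). -/
  inductive MFml (A P : Type) : Type where
    | pv : P → MFml A P
    | imp : MFml A P → MFml A P → MFml A P
    | fls : MFml A P
    | box : MTrm A P → MFml A P → MFml A P
  /-- Terms of identity-free PDL (PDL⁻). -/
  inductive MTrm (A P : Type) : Type where
    | tv : A → MTrm A P
    | comp : MTrm A P → MTrm A P → MTrm A P
    | union : MTrm A P → MTrm A P → MTrm A P
    | plus : MTrm A P → MTrm A P
    | testL : MFml A P → MTrm A P → MTrm A P
    | testR : MTrm A P → MFml A P → MTrm A P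
end

namespace MFml
/-- ¬φ := φ → F -/
def neg {A P : Type} (φ : MFml A P) : MFml A P := .imp φ .fls
/-- T := ¬F -/
def tru {A P : Type} : MFml A P := neg .fls
/-- φ ∨ ψ := ¬φ → ψ -/
def or {A P : Type} (φ ψ : MFml A P) : MFml A P := .imp (neg φ) ψ
/-- φ ∧ ψ := ¬(¬φ ∨ ¬ψ) -/
def and {A P : Type} (φ ψ : MFml A P) : MFml A P := neg (or (neg φ) (neg ψ))
/-- φ ↔ ψ := (φ → ψ) ∧ (ψ → φ) -/
def iff {A P : Type} (φ ψ : MFml A P) : MFml A P := and (.imp φ ψ) (.imp ψ φ)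
/-- ⟨e⟩φ := ¬[e]¬φ -/
def dia {A P : Type} (e : MTrm A P) (φ : MFml A P) : MFml A P := neg (.box e (neg φ))
end MFml

mutual
  /-- Semantics of PDL⁻ formulas on a generalized structure. -/
  def msemF {A P W : Type} (S : GStruct A P W) : MFml A P → W → Prop
    | .pv p, x => S.val p x
    | .imp φ ψ, x => msemF S φ x → msemF S ψ x
    | .fls, _ => False
    | .box e φ, x => ∀ y, msemT S e x y → msemF S φ y
  /-- Semantics of PDL⁻ terms on a generalized structure. -/
  def msemT {A P W : Type} (S : GStruct A P W) : MTrm A P → W → W → Prop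
    | .tv a, x, y => S.rel a x y
    | .comp e f, x, z => ∃ y, msemT S e x y ∧ msemT S f y z
    | .union e f, x, y => msemT S e x y ∨ msemT S f x y
    | .plus e, x, y => Relation.TransGen (fun u v => msemT S e u v) x y
    | .testL ψ e, x, y => msemF S ψ x ∧ msemT S e x y
    | .testR e ψ, x, y => msemT S e x y ∧ msemF S ψ y
end
/-- Propositional formulas over variables `V`. -/
inductive PropF (V : Type) : Type where
  | pv : V → PropF V
  | imp : PropF V → PropF V → PropF V
  | fls : PropF V

/-- Evaluation of a propositional formula under a valuation. -/
def PropF.eval {V : Type} (v : V → Prop) : PropF V → Prop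
  | .pv p => v p
  | .imp a b => PropF.eval v a → PropF.eval v b
  | .fls => False

/-- Substitution instance of a propositional formula, substituting PDL⁻ formulas
for the propositional variables. -/
def PropF.inst {V A P : Type} (σ : V → MFml A P) : PropF V → MFml A P
  | .pv p => σ p
  | .imp a b => .imp (PropF.inst σ a) (PropF.inst σ b)
  | .fls => .fls

/-- The Hilbert system `H⁻` for PDL⁻ on finite strict linear orders. -/
inductive MProof {A P : Type} : MFml A P → Prop where
  /-- modus ponens -/
  | mp {φ ψ : MFml A P} : MProof φ → MProof (.imp φ ψ) → MProof ψ
  /-- necessitation -/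
  | nec {φ : MFml A P} (e : MTrm A P) : MProof φ → MProof (.box e φ)
  /-- (Prop): all substitution-instances of valid propositional formulas -/
  | prop {V : Type} (χ : PropF V) (hval : ∀ v, PropF.eval v χ) (σ : V → MFml A P) :
      MProof (PropF.inst σ χ)
  /-- (;) -/
  | compAx (e f : MTrm A P) (φ : MFml A P) :
      MProof (MFml.iff (.box (.comp e f) φ) (.box e (.box f φ)))
  /-- (+) -/
  | unionAx (e f : MTrm A P) (φ : MFml A P) :
      MProof (MFml.iff (.box (.union e f) φ) (MFml.and (.box e φ) (.box f φ)))
  /-- (⁺) -/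
  | plusAx (e : MTrm A P) (φ : MFml A P) :
      MProof (MFml.iff (.box (.plus e) φ) (MFml.and (.box e φ) (.box e (.box (.plus e) φ))))
  /-- (⁺-Ind) -/
  | plusInd (e : MTrm A P) (φ : MFml A P) :
      MProof (.imp (MFml.and (.box e φ) (.box (.plus e) (.imp φ (.box e φ)))) (.box (.plus e) φ))
  /-- (?-L) -/
  | testLAx (ψ : MFml A P) (e : MTrm A P) (φ : MFml A P) :
      MProof (MFml.iff (.box (.testL ψ e) φ) (.imp ψ (.box e φ)))
  /-- (?-R) -/
  | testRAx (e : MTrm A P) (ψ φ : MFml A P) :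
      MProof (MFml.iff (.box (.testR e ψ) φ) (.box e (.imp ψ φ)))
  /-- (K) -/
  | kAx (e : MTrm A P) (φ ψ : MFml A P) :
      MProof (.imp (.box e (.imp φ ψ)) (.imp (.box e φ) (.box e ψ)))
  /-- (Löb-⁺) -/
  | loeb (e : MTrm A P) (φ : MFml A P) :
      MProof (.imp (.box (.plus e) (.imp (.box (.plus e) φ) φ)) (.box (.plus e) φ))

/-!
Soundness is a routine induction over derivations; Löb's axiom holds because the converse of a
finite strict order is well-founded.

Completeness goes through a finite canonical model whose points are the atoms (consistent
conjunctions of literals) over the Fischer–Ladner closure of `φ`, enlarged by the "Löb boxes"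
`[E⁺]¬(¬ψ ∧ ⋀X)`, where `E` is the union of the atomic programs. If `¬[a]ψ` lies in an atom `u`
and `X` collects the `χ` with `[a]χ ∈ u`, then `u` proves `⟨a⟩ξ` for `ξ = ¬ψ ∧ ⋀X`, hence
`⟨E⁺⟩ξ`, and Löb turns this into `⟨E⁺⟩(ξ ∧ [E⁺]¬ξ)`. The atom chosen as `a`-successor therefore
contains the Löb box `[E⁺]¬ξ`, which `u` lacks, together with all Löb boxes of `u` (these are
`E⁺`-transitive). So the number of Löb boxes strictly increases along every atomic step, and
ordering the atoms by it (breaking ties arbitrarily) makes the canonical model a finite strict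
linear order. The truth lemma is proved by induction on formulas and terms, the `⁺` case by
induction along the converse of that order.
-/

variable {A P : Type}

namespace MFml

def toProp : MFml A P → PropF (MFml A P)
  | .pv p => .pv (.pv p)
  | .imp φ ψ => .imp φ.toProp ψ.toProp
  | .fls => .fls
  | .box e φ => .pv (.box e φ)

theorem inst_toProp : ∀ φ : MFml A P, φ.toProp.inst id = φ
  | .pv _ => rfl
  | .imp φ ψ => by rw [toProp, PropF.inst, inst_toProp φ, inst_toProp ψ]
  | .fls => rfl
  | .box _ _ => rfl

section toProp

variable {v : MFml A P → Prop} {φ ψ : MFml A P}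

@[simp] theorem eval_toProp_imp :
    (φ.imp ψ).toProp.eval v ↔ (φ.toProp.eval v → ψ.toProp.eval v) := Iff.rfl

@[simp] theorem eval_toProp_neg : φ.neg.toProp.eval v ↔ ¬ φ.toProp.eval v := Iff.rfl

@[simp] theorem eval_toProp_dia {e : MTrm A P} :
    (dia e φ).toProp.eval v ↔ ¬ (box e φ.neg).toProp.eval v := Iff.rfl

@[simp] theorem eval_toProp_and :
    (φ.and ψ).toProp.eval v ↔ φ.toProp.eval v ∧ ψ.toProp.eval v := by
  simp [MFml.and, MFml.or]

@[simp] theorem eval_toProp_iff :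
    (φ.iff ψ).toProp.eval v ↔ (φ.toProp.eval v ↔ ψ.toProp.eval v) := by
  simp only [MFml.iff, eval_toProp_and, eval_toProp_imp]
  exact iff_iff_implies_and_implies.symm

end toProp

def conjL : List (MFml A P) → MFml A P
  | [] => tru
  | φ :: l => φ.and (conjL l)

end MFml

namespace MProof

open MFml (box dia conjL eval_toProp_imp eval_toProp_neg eval_toProp_dia eval_toProp_and
  eval_toProp_iff)

variable {a b c g : MFml A P}

theorem of_tautology {φ : MFml A P} (h : ∀ v, φ.toProp.eval v) : MProof φ := by
  simpa only [MFml.inst_toProp] using MProof.prop φ.toProp h id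

theorem mp₂ (h₁ : MProof a) (h₂ : MProof b) (h : MProof (a.imp (b.imp c))) : MProof c :=
  h₂.mp (h₁.mp h)

theorem imp_self (a : MFml A P) : MProof (a.imp a) :=
  of_tautology fun _ => id

theorem weaken (g : MFml A P) (h : MProof a) : MProof (g.imp a) :=
  h.mp (of_tautology fun _ => by simp only [eval_toProp_imp]; tauto)

theorem imp_trans (h₁ : MProof (a.imp b)) (h₂ : MProof (b.imp c)) : MProof (a.imp c) :=
  mp₂ h₁ h₂ (of_tautology fun _ => by simp only [eval_toProp_imp]; tauto)

theorem imp_imp₂ (h₁ : MProof (g.imp a)) (h₂ : MProof (g.imp b)) (h : MProof (a.imp (b.imp c))) :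
    MProof (g.imp c) :=
  h.mp (mp₂ h₁ h₂ (of_tautology fun _ => by simp only [eval_toProp_imp]; tauto))

theorem iff_refl (a : MFml A P) : MProof (a.iff a) :=
  of_tautology fun _ => by simp only [eval_toProp_iff]

theorem iff_mp (h : MProof (a.iff b)) : MProof (a.imp b) :=
  h.mp (of_tautology fun _ => by simp only [eval_toProp_imp, eval_toProp_iff]; tauto)

theorem iff_mpr (h : MProof (a.iff b)) : MProof (b.imp a) :=
  h.mp (of_tautology fun _ => by simp only [eval_toProp_imp, eval_toProp_iff]; tauto)

theorem and_left (a b : MFml A P) : MProof ((a.and b).imp a) :=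
  of_tautology fun _ => by simp only [eval_toProp_imp, eval_toProp_and]; tauto

theorem and_right (a b : MFml A P) : MProof ((a.and b).imp b) :=
  of_tautology fun _ => by simp only [eval_toProp_imp, eval_toProp_and]; tauto

theorem imp_and (h₁ : MProof (g.imp a)) (h₂ : MProof (g.imp b)) : MProof (g.imp (a.and b)) :=
  imp_imp₂ h₁ h₂ (of_tautology fun _ => by simp only [eval_toProp_imp, eval_toProp_and]; tauto)

theorem contrapose (h : MProof (a.imp b)) : MProof (b.neg.imp a.neg) :=
  h.mp (of_tautology fun _ => by simp only [eval_toProp_imp, eval_toProp_neg]; tauto)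

theorem imp_neg_of_imp₂ {x y z : MFml A P} (hxyz : MProof (x.imp (y.imp z)))
    (h₁ : MProof (g.imp z.neg)) (h₂ : MProof (g.imp y)) : MProof (g.imp x.neg) :=
  mp₂ h₁ h₂ (hxyz.mp (of_tautology fun _ => by
    simp only [eval_toProp_imp, eval_toProp_neg]; tauto))

theorem conjL_imp_of_mem {l : List (MFml A P)} (h : a ∈ l) : MProof ((conjL l).imp a) := by
  induction l with
  | nil => cases h
  | cons b l ih =>
    rcases List.mem_cons.1 h with rfl | h
    · exact and_left _ _
    · exact (and_right _ _).imp_trans (ih h)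

theorem box_mono (e : MTrm A P) (h : MProof (a.imp b)) : MProof ((box e a).imp (box e b)) :=
  (nec e h).mp (kAx e a b)

theorem box_imp₂ (e : MTrm A P) (h : MProof (a.imp (b.imp c))) :
    MProof ((box e a).imp ((box e b).imp (box e c))) :=
  (box_mono e h).imp_trans (kAx e b c)

theorem imp_box_conjL {e : MTrm A P} {l : List (MFml A P)}
    (h : ∀ φ ∈ l, MProof (g.imp (box e φ))) : MProof (g.imp (box e (conjL l))) := by
  induction l with
  | nil => exact weaken g (nec e (of_tautology fun _ => id))
  | cons φ l ih =>
    refine imp_imp₂ (h φ (List.mem_cons_self ..)) (ih fun ψ hψ => h ψ (List.mem_cons_of_mem _ hψ))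
      (box_imp₂ e (of_tautology fun _ => ?_))
    simp only [conjL, eval_toProp_imp, eval_toProp_and]; tauto

theorem dia_mono (e : MTrm A P) (h : MProof (a.imp b)) : MProof ((dia e a).imp (dia e b)) :=
  contrapose (box_mono e (contrapose h))

theorem imp_dia_and {e : MTrm A P} (h₁ : MProof (g.imp (dia e a)))
    (h₂ : MProof (g.imp (box e b))) : MProof (g.imp (dia e (a.and b))) :=
  imp_neg_of_imp₂ (box_imp₂ e (of_tautology fun _ => by
    simp only [eval_toProp_imp, eval_toProp_neg, eval_toProp_and]; tauto)) h₁ h₂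

theorem box_union_imp_box_left (e f : MTrm A P) (a : MFml A P) :
    MProof ((box (e.union f) a).imp (box e a)) :=
  (iff_mp (unionAx e f a)).imp_trans (and_left _ _)

theorem box_union_imp_box_right (e f : MTrm A P) (a : MFml A P) :
    MProof ((box (e.union f) a).imp (box f a)) :=
  (iff_mp (unionAx e f a)).imp_trans (and_right _ _)

theorem box_plus_imp_box (e : MTrm A P) (a : MFml A P) :
    MProof ((box e.plus a).imp (box e a)) :=
  (iff_mp (plusAx e a)).imp_trans (and_left _ _)

theorem box_plus_imp_box_box_plus (e : MTrm A P) (a : MFml A P) :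
    MProof ((box e.plus a).imp (box e (box e.plus a))) :=
  (iff_mp (plusAx e a)).imp_trans (and_right _ _)

theorem box_plus_imp_box_plus_box_plus (e : MTrm A P) (a : MFml A P) :
    MProof ((box e.plus a).imp (box e.plus (box e.plus a))) :=
  (imp_and (box_plus_imp_box_box_plus e a)
    (weaken _ (nec _ (box_plus_imp_box_box_plus e a)))).imp_trans (plusInd e _)

theorem dia_plus_imp_dia_plus_and_box_plus_neg (e : MTrm A P) (a : MFml A P) :
    MProof ((dia e.plus a).imp (dia e.plus (a.and (box e.plus a.neg)))) := by
  refine contrapose ((box_mono _ (of_tautology fun _ => ?_)).imp_trans (loeb e a.neg))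
  simp only [eval_toProp_imp, eval_toProp_neg, eval_toProp_and]; tauto

theorem imp_dia_plus_of_imp_not_box {ψ c : MFml A P} {e E : MTrm A P}
    (hE : MProof ((box E (ψ.neg.and c).neg).imp (box e (ψ.neg.and c).neg)))
    (h₁ : MProof (g.imp (box e ψ).neg)) (h₂ : MProof (g.imp (box e c))) :
    MProof (g.imp (dia E.plus (ψ.neg.and c))) := by
  have h : MProof (g.imp (dia e (ψ.neg.and c))) :=
    imp_neg_of_imp₂ (box_imp₂ e (of_tautology fun _ => by
      simp only [eval_toProp_imp, eval_toProp_neg, eval_toProp_and]; tauto)) h₁ h₂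
  exact h.imp_trans (contrapose ((box_plus_imp_box E _).imp_trans hE))

end MProof

namespace MFml

open MProof

def Consistent (φ : MFml A P) : Prop := ¬ MProof φ.neg

theorem not_consistent_iff {φ : MFml A P} : ¬ φ.Consistent ↔ MProof φ.neg := not_not

variable {g x : MFml A P} {e : MTrm A P}

theorem Consistent.mono {ψ : MFml A P} (h : x.Consistent) (hxψ : MProof (x.imp ψ)) :
    ψ.Consistent :=
  fun hψ => h (hxψ.imp_trans hψ)

theorem Consistent.and_or_and_neg (hx : x.Consistent) (φ : MFml A P) :
    (x.and φ).Consistent ∨ (x.and φ.neg).Consistent := by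
  by_contra! hc
  refine hx (mp₂ (not_consistent_iff.1 hc.1) (not_consistent_iff.1 hc.2) ?_)
  exact of_tautology fun _ => by
    simp only [eval_toProp_imp, eval_toProp_neg, eval_toProp_and]; tauto

theorem Consistent.and_dia_or_and_dia_neg (hx : (g.and (dia e x)).Consistent) (φ : MFml A P) :
    (g.and (dia e (x.and φ))).Consistent ∨ (g.and (dia e (x.and φ.neg))).Consistent := by
  by_contra! hc
  refine hx (mp₂ (not_consistent_iff.1 hc.1) (not_consistent_iff.1 hc.2) ?_)
  have hbox := box_imp₂ e (a := (x.and φ).neg) (b := (x.and φ.neg).neg) (c := x.neg)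
    (of_tautology fun _ => by simp only [eval_toProp_imp, eval_toProp_neg, eval_toProp_and]; tauto)
  refine hbox.mp (of_tautology fun _ => ?_)
  simp only [eval_toProp_imp, eval_toProp_neg, eval_toProp_and, eval_toProp_dia]; tauto

theorem Consistent.of_and_dia (hx : (g.and (dia e x)).Consistent) : x.Consistent := fun h =>
  hx ((nec e h).mp (of_tautology fun _ => by
    simp only [eval_toProp_imp, eval_toProp_neg, eval_toProp_and, eval_toProp_dia]; tauto))

end MFml

open MFml (box dia conjL Consistent)

section Semantics

variable {W : Type} {S : GStruct A P W}

@[simp] theorem msemF_neg {φ : MFml A P} {x : W} : msemF S φ.neg x ↔ ¬ msemF S φ x := by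
  simp only [MFml.neg, msemF]

@[simp] theorem msemF_and {φ ψ : MFml A P} {x : W} :
    msemF S (φ.and ψ) x ↔ msemF S φ x ∧ msemF S ψ x := by
  simp only [MFml.and, MFml.or, msemF_neg, msemF]
  tauto

@[simp] theorem msemF_iff {φ ψ : MFml A P} {x : W} :
    msemF S (φ.iff ψ) x ↔ (msemF S φ x ↔ msemF S ψ x) := by
  simp only [MFml.iff, msemF_and, msemF, iff_iff_implies_and_implies]

theorem msemF_inst {V : Type} (σ : V → MFml A P) (x : W) :
    ∀ χ : PropF V, msemF S (χ.inst σ) x ↔ χ.eval fun v => msemF S (σ v) x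
  | .pv _ => Iff.rfl
  | .imp χ₁ χ₂ => imp_congr (msemF_inst σ x χ₁) (msemF_inst σ x χ₂)
  | .fls => Iff.rfl

theorem msemT_sub_U (htrans : ∀ x y z, S.U x y → S.U y z → S.U x z) :
    ∀ (e : MTrm A P) {x y : W}, msemT S e x y → S.U x y
  | .tv a, _, _, h => S.rel_sub a _ _ h
  | .comp e f, _, _, ⟨_, h₁, h₂⟩ =>
    htrans _ _ _ (msemT_sub_U htrans e h₁) (msemT_sub_U htrans f h₂)
  | .union e _, _, _, .inl h => msemT_sub_U htrans e h
  | .union _ f, _, _, .inr h => msemT_sub_U htrans f h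
  | .plus e, _, _, h => by
    induction h with
    | single h => exact msemT_sub_U htrans e h
    | tail _ h ih => exact htrans _ _ _ ih (msemT_sub_U htrans e h)
  | .testL _ e, _, _, h => msemT_sub_U htrans e h.2
  | .testR e _, _, _, h => msemT_sub_U htrans e h.1

theorem SFinLin.wellFounded (hS : SFinLin S) : WellFounded fun y x : W => S.U x y := by
  obtain ⟨-, _, hirr, htrans, -⟩ := hS
  have : IsTrans W fun y x => S.U x y := ⟨fun _ _ _ h₁ h₂ => htrans _ _ _ h₂ h₁⟩
  have : Std.Irrefl fun y x : W => S.U x y := ⟨hirr⟩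
  exact Finite.wellFounded_of_trans_of_irrefl _

theorem sFinLin_of_injective {β : Type} [Nonempty W] [Finite W] [LinearOrder β] (f : W → β)
    (hf : Function.Injective f) (hU : ∀ x y, S.U x y ↔ f x < f y) : SFinLin S := by
  refine ⟨‹_›, ‹_›, fun x => by simp [hU], fun x y z => ?_, fun x y hxy => ?_⟩
  · simp only [hU]; exact lt_trans
  · simp only [hU]; exact lt_or_gt_of_ne (hf.ne hxy)

end Semantics

theorem Relation.forall_transGen_iff {α : Type} {r : α → α → Prop} {p : α → Prop} {x : α} :
    (∀ y, Relation.TransGen r x y → p y) ↔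
      (∀ y, r x y → p y) ∧ ∀ y, r x y → ∀ z, Relation.TransGen r y z → p z := by
  refine ⟨fun h => ⟨fun y hy => h y (.single hy), fun y hy z hz => h z (hz.head hy)⟩, ?_⟩
  rintro ⟨h₁, h₂⟩ z hz
  obtain ⟨y, hy, hyz⟩ := Relation.TransGen.head'_iff.1 hz
  rcases Relation.reflTransGen_iff_eq_or_transGen.1 hyz with rfl | hyz
  exacts [h₁ _ hy, h₂ y hy z hyz]

theorem MProof.sound {φ : MFml A P} (h : MProof φ) {W : Type} {S : GStruct A P W}
    (hS : SFinLin S) : ∀ x, msemF S φ x := by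
  induction h with
  | mp _ _ ih₁ ih₂ => exact fun x => ih₂ x (ih₁ x)
  | nec e _ ih => exact fun x y _ => ih y
  | prop χ hχ σ => exact fun x => (msemF_inst σ x χ).2 (hχ _)
  | compAx e f φ =>
    intro x
    simp only [msemF_iff, msemF, msemT, forall_exists_index, and_imp]
    exact ⟨fun h m hm y hy => h y m hm hy, fun h y m hm hy => h m hm y hy⟩
  | unionAx e f φ => intro x; simp [msemF, msemT, or_imp, forall_and]
  | plusAx e φ =>
    intro x
    simp only [msemF_iff, msemF_and, msemF, msemT]
    exact Relation.forall_transGen_iff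
  | plusInd e φ =>
    intro x
    simp only [msemF, msemF_and, msemT, and_imp]
    intro hbase hstep y hy
    induction hy with
    | single h => exact hbase _ h
    | tail hxy hyz ih => exact hstep _ hxy ih _ hyz
  | testLAx ψ e φ => intro x; simp [msemF, msemT, imp_forall_iff]
  | testRAx e ψ φ => intro x; simp [msemF, msemT]
  | kAx e φ ψ => exact fun x h₁ h₂ y hy => h₁ y hy (h₂ y hy)
  | loeb e φ =>
    intro x hloeb y hy
    induction y using hS.wellFounded.induction with
    | _ y ih =>
      refine hloeb y hy fun z hz => ih z ?_ (hy.trans hz)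
      exact msemT_sub_U hS.2.2.2.1 (.plus e) hz

section Closure

variable [DecidableEq (MFml A P)]

mutual

def clF : MFml A P → Finset (MFml A P)
  | .pv p => {.pv p}
  | .imp φ ψ => insert (.imp φ ψ) (clF φ ∪ clF ψ)
  | .fls => {.fls}
  | .box e ψ => boxcl e ψ ∪ clF ψ
termination_by φ => sizeOf φ
decreasing_by all_goals simp <;> omega

def boxcl : MTrm A P → MFml A P → Finset (MFml A P)
  | .tv a, ψ => {.box (.tv a) ψ}
  | .comp e f, ψ => insert (.box (.comp e f) ψ) (boxcl e (.box f ψ) ∪ boxcl f ψ)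
  | .union e f, ψ => insert (.box (.union e f) ψ) (boxcl e ψ ∪ boxcl f ψ)
  | .plus e, ψ => insert (.box (.plus e) ψ) (boxcl e ψ ∪ boxcl e (.box (.plus e) ψ))
  | .testL χ e, ψ => insert (.box (.testL χ e) ψ) (clF χ ∪ boxcl e ψ)
  | .testR e χ, ψ =>
      insert (.box (.testR e χ) ψ) (insert (.imp χ ψ) (clF χ ∪ boxcl e (.imp χ ψ)))
termination_by e => sizeOf e
decreasing_by all_goals simp <;> omega

end

theorem self_mem_boxcl (e : MTrm A P) (ψ : MFml A P) : box e ψ ∈ boxcl e ψ := by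
  cases e <;> simp [boxcl]

theorem self_mem_clF : ∀ φ : MFml A P, φ ∈ clF φ
  | .pv _ | .fls => by simp [clF]
  | .imp _ _ => by simp [clF]
  | .box e ψ => by simp [clF, self_mem_boxcl]

open Finset in
mutual

theorem mem_clF_trans :
    ∀ (φ : MFml A P) {α β : MFml A P}, α ∈ clF φ → β ∈ clF α → β ∈ clF φ
  | .pv _, _, _, hα, hβ | .fls, _, _, hα, hβ => by
    rw [clF, mem_singleton] at hα; rwa [hα] at hβ
  | .imp φ ψ, α, β, hα, hβ => by
    simp only [clF, mem_insert, mem_union] at hα ⊢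
    rcases hα with rfl | hα | hα
    · simpa only [clF, mem_insert, mem_union] using hβ
    · exact .inr (.inl (mem_clF_trans φ hα hβ))
    · exact .inr (.inr (mem_clF_trans ψ hα hβ))
  | .box e ψ, α, β, hα, hβ => by
    simp only [clF, mem_union] at hα ⊢
    rcases hα with hα | hα
    exacts [mem_boxcl_trans e ψ hα hβ, .inr (mem_clF_trans ψ hα hβ)]
termination_by φ => sizeOf φ
decreasing_by all_goals simp_wf <;> omega

theorem mem_boxcl_trans : ∀ (e : MTrm A P) (ψ : MFml A P) {α β : MFml A P},
    α ∈ boxcl e ψ → β ∈ clF α → β ∈ boxcl e ψ ∨ β ∈ clF ψ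
  | .tv a, ψ, α, β, hα, hβ => by
    rw [boxcl, mem_singleton] at hα; subst hα; simpa only [clF, mem_union] using hβ
  | .comp e f, ψ, α, β, hα, hβ => by
    simp only [boxcl, mem_insert, mem_union] at hα ⊢
    rcases hα with rfl | hα | hα
    · simpa only [clF, boxcl, mem_insert, mem_union] using hβ
    · have := mem_boxcl_trans e _ hα hβ
      simp only [clF, mem_union] at this; tauto
    · have := mem_boxcl_trans f ψ hα hβ; tauto
  | .union e f, ψ, α, β, hα, hβ => by
    simp only [boxcl, mem_insert, mem_union] at hα ⊢
    rcases hα with rfl | hα | hα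
    · simpa only [clF, boxcl, mem_insert, mem_union] using hβ
    · have := mem_boxcl_trans e ψ hα hβ; tauto
    · have := mem_boxcl_trans f ψ hα hβ; tauto
  | .plus e, ψ, α, β, hα, hβ => by
    simp only [boxcl, mem_insert, mem_union] at hα ⊢
    rcases hα with rfl | hα | hα
    · simpa only [clF, boxcl, mem_insert, mem_union] using hβ
    · have := mem_boxcl_trans e ψ hα hβ; tauto
    · have := mem_boxcl_trans e _ hα hβ
      simp only [clF, boxcl, mem_insert, mem_union] at this; tauto
  | .testL χ e, ψ, α, β, hα, hβ => by
    simp only [boxcl, mem_insert, mem_union] at hα ⊢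
    rcases hα with rfl | hα | hα
    · simpa only [clF, boxcl, mem_insert, mem_union] using hβ
    · have := mem_clF_trans χ hα hβ; tauto
    · have := mem_boxcl_trans e ψ hα hβ; tauto
  | .testR e χ, ψ, α, β, hα, hβ => by
    simp only [boxcl, mem_insert, mem_union] at hα ⊢
    rcases hα with rfl | rfl | hα | hα
    · simpa only [clF, boxcl, mem_insert, mem_union] using hβ
    · simp only [clF, mem_insert, mem_union] at hβ; tauto
    · have := mem_clF_trans χ hα hβ; tauto
    · have := mem_boxcl_trans e _ hα hβ
      simp only [clF, mem_insert, mem_union] at this; tauto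
termination_by e => sizeOf e
decreasing_by all_goals simp_wf <;> omega

end

end Closure

structure FLClosed (Γ : Finset (MFml A P)) : Prop where
  imp_left {φ ψ : MFml A P} : .imp φ ψ ∈ Γ → φ ∈ Γ
  imp_right {φ ψ : MFml A P} : .imp φ ψ ∈ Γ → ψ ∈ Γ
  box_target {e : MTrm A P} {φ : MFml A P} : box e φ ∈ Γ → φ ∈ Γ
  comp {e f : MTrm A P} {φ : MFml A P} : box (.comp e f) φ ∈ Γ → box e (box f φ) ∈ Γ
  union_left {e f : MTrm A P} {φ : MFml A P} : box (.union e f) φ ∈ Γ → box e φ ∈ Γ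
  union_right {e f : MTrm A P} {φ : MFml A P} : box (.union e f) φ ∈ Γ → box f φ ∈ Γ
  plus_base {e : MTrm A P} {φ : MFml A P} : box (.plus e) φ ∈ Γ → box e φ ∈ Γ
  plus_step {e : MTrm A P} {φ : MFml A P} : box (.plus e) φ ∈ Γ → box e (box (.plus e) φ) ∈ Γ
  testL_test {ψ φ : MFml A P} {e : MTrm A P} : box (.testL ψ e) φ ∈ Γ → ψ ∈ Γ
  testL_box {ψ φ : MFml A P} {e : MTrm A P} : box (.testL ψ e) φ ∈ Γ → box e φ ∈ Γ
  testR {ψ φ : MFml A P} {e : MTrm A P} : box (.testR e ψ) φ ∈ Γ → box e (.imp ψ φ) ∈ Γ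

theorem flClosed_clF [DecidableEq (MFml A P)] (φ : MFml A P) : FLClosed (clF φ) := by
  constructor <;> intros <;> refine mem_clF_trans φ ‹_› ?_ <;>
    simp [clF, boxcl, self_mem_clF, self_mem_boxcl]

section Atoms

open MProof

variable [DecidableEq (MFml A P)] {Γ s : Finset (MFml A P)} {δ φ : MFml A P}

def litConj (l : List (MFml A P)) (s : Finset (MFml A P)) : MFml A P :=
  conjL (l.map fun φ => if φ ∈ s then φ else φ.neg)

noncomputable def charF (Γ s : Finset (MFml A P)) : MFml A P := litConj Γ.toList s

def IsAtomOver (Γ s : Finset (MFml A P)) : Prop := s ⊆ Γ ∧ Consistent (charF Γ s)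

theorem charF_imp_of_mem (hφ : φ ∈ Γ) (h : φ ∈ s) : MProof ((charF Γ s).imp φ) :=
  conjL_imp_of_mem (List.mem_map.2 ⟨φ, Finset.mem_toList.2 hφ, if_pos h⟩)

theorem charF_imp_neg_of_notMem (hφ : φ ∈ Γ) (h : φ ∉ s) : MProof ((charF Γ s).imp φ.neg) :=
  conjL_imp_of_mem (List.mem_map.2 ⟨φ, Finset.mem_toList.2 hφ, if_neg h⟩)

theorem charF_decides_inst (s : Finset (MFml A P)) : ∀ χ : PropF Γ,
    (χ.eval (fun φ => φ.1 ∈ s) → MProof ((charF Γ s).imp (χ.inst Subtype.val))) ∧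
      (¬ χ.eval (fun φ => φ.1 ∈ s) → MProof ((charF Γ s).imp (χ.inst Subtype.val).neg))
  | .pv ⟨φ, hφ⟩ => ⟨charF_imp_of_mem hφ, charF_imp_neg_of_notMem hφ⟩
  | .fls => ⟨False.elim, fun _ => weaken _ (imp_self _)⟩
  | .imp χ₁ χ₂ => by
    obtain ⟨h₁, h₁'⟩ := charF_decides_inst s χ₁
    obtain ⟨h₂, h₂'⟩ := charF_decides_inst s χ₂
    simp only [PropF.eval, PropF.inst, Classical.not_imp]
    by_cases e₁ : χ₁.eval (fun φ => φ.1 ∈ s)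
    · by_cases e₂ : χ₂.eval (fun φ => φ.1 ∈ s)
      · refine ⟨fun _ => (h₂ e₂).imp_trans (of_tautology fun _ => ?_), fun h => (h.2 e₂).elim⟩
        simp only [MFml.eval_toProp_imp]; tauto
      · refine ⟨fun h => (e₂ (h e₁)).elim, fun _ => imp_imp₂ (h₁ e₁) (h₂' e₂) ?_⟩
        exact of_tautology fun _ => by
          simp only [MFml.eval_toProp_imp, MFml.eval_toProp_neg]; tauto
    · refine ⟨fun _ => (h₁' e₁).imp_trans (of_tautology fun _ => ?_), fun h => (e₁ h.1).elim⟩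
      simp only [MFml.eval_toProp_imp, MFml.eval_toProp_neg]; tauto

theorem eval_of_consistent (hδ : Consistent δ) (hs : MProof (δ.imp (charF Γ s)))
    {χ : PropF Γ} (h : MProof (δ.imp (χ.inst Subtype.val))) : χ.eval (fun φ => φ.1 ∈ s) := by
  by_contra hne
  refine hδ (imp_imp₂ h (hs.imp_trans ((charF_decides_inst s χ).2 hne)) ?_)
  exact of_tautology fun _ => by simp only [MFml.eval_toProp_imp, MFml.eval_toProp_neg]; tauto

theorem mem_of_consistent (hδ : Consistent δ) (hs : MProof (δ.imp (charF Γ s))) (hφ : φ ∈ Γ)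
    (h : MProof (δ.imp φ)) : φ ∈ s :=
  eval_of_consistent (χ := .pv ⟨φ, hφ⟩) hδ hs h

theorem notMem_of_consistent (hδ : Consistent δ) (hs : MProof (δ.imp (charF Γ s)))
    (hφ : φ ∈ Γ) (h : MProof (δ.imp φ.neg)) : φ ∉ s :=
  eval_of_consistent (χ := .imp (.pv ⟨φ, hφ⟩) .fls) hδ hs h

namespace IsAtomOver

variable {ψ θ : MFml A P}

theorem eval_of_provable (hs : IsAtomOver Γ s) {χ : PropF Γ}
    (h : MProof (χ.inst Subtype.val)) : χ.eval (fun φ => φ.1 ∈ s) :=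
  eval_of_consistent hs.2 (imp_self _) (weaken _ h)

theorem mem_iff_of_provable (hs : IsAtomOver Γ s) (hφ : φ ∈ Γ) (hψ : ψ ∈ Γ)
    (h : MProof (φ.iff ψ)) : φ ∈ s ↔ ψ ∈ s :=
  ⟨hs.eval_of_provable (χ := .imp (.pv ⟨φ, hφ⟩) (.pv ⟨ψ, hψ⟩)) h.iff_mp,
    hs.eval_of_provable (χ := .imp (.pv ⟨ψ, hψ⟩) (.pv ⟨φ, hφ⟩)) h.iff_mpr⟩

theorem mem_iff_imp_of_provable (hs : IsAtomOver Γ s) (hφ : φ ∈ Γ) (hψ : ψ ∈ Γ) (hθ : θ ∈ Γ)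
    (h : MProof (φ.iff (ψ.imp θ))) : φ ∈ s ↔ (ψ ∈ s → θ ∈ s) :=
  ⟨hs.eval_of_provable (χ := .imp (.pv ⟨φ, hφ⟩) (.imp (.pv ⟨ψ, hψ⟩) (.pv ⟨θ, hθ⟩))) h.iff_mp,
    hs.eval_of_provable (χ := .imp (.imp (.pv ⟨ψ, hψ⟩) (.pv ⟨θ, hθ⟩)) (.pv ⟨φ, hφ⟩)) h.iff_mpr⟩

theorem mem_iff_and_of_provable (hs : IsAtomOver Γ s) (hφ : φ ∈ Γ) (hψ : ψ ∈ Γ) (hθ : θ ∈ Γ)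
    (h : MProof (φ.iff (ψ.and θ))) : φ ∈ s ↔ ψ ∈ s ∧ θ ∈ s := by
  have hψθφ : MProof (ψ.imp (θ.imp φ)) := h.iff_mpr.mp (of_tautology fun _ => by
    simp only [MFml.eval_toProp_imp, MFml.eval_toProp_and]; tauto)
  refine ⟨fun h' => ⟨?_, ?_⟩, fun h' => ?_⟩
  · exact hs.eval_of_provable (χ := .imp (.pv ⟨φ, hφ⟩) (.pv ⟨ψ, hψ⟩))
      (h.iff_mp.imp_trans (and_left _ _)) h'
  · exact hs.eval_of_provable (χ := .imp (.pv ⟨φ, hφ⟩) (.pv ⟨θ, hθ⟩))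
      (h.iff_mp.imp_trans (and_right _ _)) h'
  · exact hs.eval_of_provable (χ := .imp (.pv ⟨ψ, hψ⟩) (.imp (.pv ⟨θ, hθ⟩) (.pv ⟨φ, hφ⟩)))
      hψθφ h'.1 h'.2

theorem fls_notMem (hs : IsAtomOver Γ s) (h : (MFml.fls : MFml A P) ∈ Γ) : MFml.fls ∉ s :=
  hs.eval_of_provable (χ := .imp (.pv ⟨_, h⟩) .fls) (imp_self _)

end IsAtomOver

theorem exists_consistent_litConj (M : MFml A P → MFml A P)
    (hmono : ∀ {x y}, MProof (x.imp y) → Consistent (M x) → Consistent (M y))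
    (hsplit : ∀ {x} φ, Consistent (M x) →
      Consistent (M (x.and φ)) ∨ Consistent (M (x.and φ.neg))) :
    ∀ {l : List (MFml A P)}, l.Nodup → ∀ {δ}, Consistent (M δ) →
      ∃ s : Finset (MFml A P), (∀ φ ∈ s, φ ∈ l) ∧ Consistent (M (δ.and (litConj l s)))
  | [], _, δ, h =>
    ⟨∅, by simp, hmono (imp_and (imp_self δ) (weaken _ (of_tautology fun _ => id))) h⟩
  | φ :: l, hl, δ, h => by
    obtain ⟨hφl, hl⟩ := List.nodup_cons.1 hl
    have hassoc : ∀ ψ ρ, MProof (((δ.and ψ).and ρ).imp (δ.and (ψ.and ρ))) := fun ψ ρ =>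
      of_tautology fun _ => by simp only [MFml.eval_toProp_imp, MFml.eval_toProp_and]; tauto
    rcases hsplit φ h with h | h
    · obtain ⟨s, hsl, hs⟩ := exists_consistent_litConj M hmono hsplit hl h
      refine ⟨insert φ s, by simpa using fun ψ hψ => .inr (hsl ψ hψ), ?_⟩
      have : litConj (φ :: l) (insert φ s) = φ.and (litConj l s) := by
        simp only [litConj, List.map_cons, conjL, Finset.mem_insert_self, if_true]
        congr 2
        refine List.map_congr_left fun ψ hψ => ?_
        simp [Finset.mem_insert, ne_of_mem_of_not_mem hψ hφl]
      rw [this]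
      exact hmono (hassoc _ _) hs
    · obtain ⟨s, hsl, hs⟩ := exists_consistent_litConj M hmono hsplit hl h
      have hφs : φ ∉ s := fun h => hφl (hsl φ h)
      refine ⟨s, fun ψ hψ => List.mem_cons_of_mem _ (hsl ψ hψ), ?_⟩
      have : litConj (φ :: l) s = φ.neg.and (litConj l s) := by
        simp [litConj, conjL, hφs]
      rw [this]
      exact hmono (hassoc _ _) hs

theorem exists_isAtomOver_of_consistent_map (M : MFml A P → MFml A P)
    (hmono : ∀ {x y}, MProof (x.imp y) → Consistent (M x) → Consistent (M y))
    (hsplit : ∀ {x} φ, Consistent (M x) →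
      Consistent (M (x.and φ)) ∨ Consistent (M (x.and φ.neg)))
    (hM : ∀ {x}, Consistent (M x) → Consistent x) (hδ : Consistent (M δ)) :
    ∃ s, IsAtomOver Γ s ∧ Consistent (δ.and (charF Γ s)) := by
  obtain ⟨s, hsΓ, hs⟩ := exists_consistent_litConj M hmono hsplit (Finset.nodup_toList Γ) hδ
  exact ⟨s, ⟨fun φ h => Finset.mem_toList.1 (hsΓ φ h), (hM hs).mono (and_right _ _)⟩, hM hs⟩

theorem exists_isAtomOver_of_consistent (hδ : Consistent δ) :
    ∃ s, IsAtomOver Γ s ∧ Consistent (δ.and (charF Γ s)) :=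
  exists_isAtomOver_of_consistent_map id (fun h hx => hx.mono h) (fun φ hx => hx.and_or_and_neg φ)
    id hδ

theorem exists_isAtomOver_of_consistent_and_dia {g : MFml A P} {e : MTrm A P}
    (hδ : Consistent (g.and (dia e δ))) :
    ∃ s, IsAtomOver Γ s ∧ Consistent (δ.and (charF Γ s)) :=
  exists_isAtomOver_of_consistent_map (fun x => g.and (dia e x))
    (fun h hx => hx.mono (imp_and (and_left _ _) ((and_right _ _).imp_trans (dia_mono e h))))
    (fun φ hx => hx.and_dia_or_and_dia_neg φ) (fun hx => hx.of_and_dia) hδ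

end Atoms

section Canonical

open MProof

variable (Γ₀ : Finset (MFml A P))

def tvBoxVar : MFml A P → Option A
  | .box (.tv a) _ => some a
  | _ => none

noncomputable def boxVars : List A := Γ₀.toList.filterMap tvBoxVar

theorem mem_boxVars {a : A} {φ : MFml A P} (h : box (.tv a) φ ∈ Γ₀) : a ∈ boxVars Γ₀ :=
  List.mem_filterMap.2 ⟨_, Finset.mem_toList.2 h, rfl⟩

def unionTv : A → List A → MTrm A P
  | a, [] => .tv a
  | a, b :: l => .union (.tv a) (unionTv b l)

theorem box_unionTv_imp {φ : MFml A P} :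
    ∀ {a b : A} {l : List A}, b ∈ a :: l → MProof ((box (unionTv a l) φ).imp (box (.tv b) φ))
  | _, _, [], h => by rw [List.mem_singleton.1 h]; exact imp_self _
  | _, _, _ :: _, h => by
    rcases List.mem_cons.1 h with rfl | h
    · exact box_union_imp_box_left _ _ _
    · exact (box_union_imp_box_right _ _ _).imp_trans (box_unionTv_imp h)

noncomputable def loebBox (E : MTrm A P) (X : Finset (MFml A P)) (ψ : MFml A P) : MFml A P :=
  box E.plus (ψ.neg.and (conjL X.toList)).neg

variable [DecidableEq (MFml A P)]

/-- `E` is the union of the atomic programs boxed in `Γ₀`; if there are none, no successor is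
ever needed and there are no Löb boxes. -/
noncomputable def loebBoxes : Finset (MFml A P) :=
  match boxVars Γ₀ with
  | [] => ∅
  | a :: l => (Γ₀.powerset ×ˢ Γ₀).image fun q => loebBox (unionTv a l) q.1 q.2

noncomputable def extClosure : Finset (MFml A P) := Γ₀ ∪ loebBoxes Γ₀

theorem subset_extClosure : Γ₀ ⊆ extClosure Γ₀ := Finset.subset_union_left

noncomputable def rank (s : Finset (MFml A P)) : ℕ := (s ∩ loebBoxes Γ₀).card

def boxTargets (a : A) (u : Finset (MFml A P)) : Finset (MFml A P) :=
  Γ₀.filter fun φ => box (.tv a) φ ∈ u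

def World : Type := {s : Finset (MFml A P) // IsAtomOver (extClosure Γ₀) s}

instance : Finite (World Γ₀) :=
  ((extClosure Γ₀).powerset.finite_toSet.subset fun _ h => Finset.mem_powerset.2 h.1).to_subtype

noncomputable def position (w : World Γ₀) : ℕ ×ₗ Fin (Nat.card (World Γ₀)) :=
  toLex (rank Γ₀ w.1, Finite.equivFin _ w)

theorem position_injective : Function.Injective (position Γ₀) :=
  fun _ _ h => (Finite.equivFin _).injective (congrArg (fun p => (ofLex p).2) h)

noncomputable def canonical : GStruct A P (World Γ₀) where
  U u t := position Γ₀ u < position Γ₀ t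
  rel a u t := position Γ₀ u < position Γ₀ t ∧ boxTargets Γ₀ a u.1 ⊆ t.1
  rel_sub _ _ _ h := h.1
  val p w := .pv p ∈ w.1

theorem sFinLin_canonical [Nonempty (World Γ₀)] : SFinLin (canonical Γ₀) :=
  sFinLin_of_injective (position Γ₀) (position_injective Γ₀) fun _ _ => Iff.rfl

variable {Γ₀}

theorem exists_term_loebBoxes {a : A} {ψ : MFml A P} (h : box (.tv a) ψ ∈ Γ₀) :
    ∃ E : MTrm A P, (∀ φ, MProof ((box E φ).imp (box (.tv a) φ))) ∧
      (∀ X ⊆ Γ₀, ∀ φ ∈ Γ₀, loebBox E X φ ∈ loebBoxes Γ₀) ∧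
      ∀ η ∈ loebBoxes Γ₀, ∃ χ, η = box E.plus χ := by
  have ha := mem_boxVars Γ₀ h
  obtain ⟨b, l, hbl⟩ := List.exists_cons_of_ne_nil (List.ne_nil_of_mem ha)
  rw [hbl] at ha
  have hL : loebBoxes Γ₀ = (Γ₀.powerset ×ˢ Γ₀).image fun q => loebBox (unionTv b l) q.1 q.2 := by
    rw [loebBoxes, hbl]
  refine ⟨unionTv b l, fun φ => box_unionTv_imp ha, fun X hX φ hφ => ?_, fun η hη => ?_⟩
  · rw [hL]
    exact Finset.mem_image_of_mem (fun q => loebBox _ q.1 q.2) (a := (X, φ))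
      (Finset.mem_product.2 ⟨Finset.mem_powerset.2 hX, hφ⟩)
  · rw [hL] at hη
    obtain ⟨q, -, rfl⟩ := Finset.mem_image.1 hη
    exact ⟨_, rfl⟩

variable {u : Finset (MFml A P)}

theorem charF_imp_not_loebBox (hu : IsAtomOver (extClosure Γ₀) u) {E : MTrm A P} {a : A}
    {ψ : MFml A P} (hE : ∀ φ, MProof ((box E φ).imp (box (.tv a) φ))) (hψ : box (.tv a) ψ ∈ Γ₀)
    (hn : box (.tv a) ψ ∉ u) :
    MProof ((charF (extClosure Γ₀) u).imp (loebBox E (boxTargets Γ₀ a u) ψ).neg) := by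
  refine imp_dia_plus_of_imp_not_box (hE _)
    (charF_imp_neg_of_notMem (subset_extClosure Γ₀ hψ) hn) (imp_box_conjL fun φ hφ => ?_)
  have hφu := (Finset.mem_filter.1 (Finset.mem_toList.1 hφ)).2
  exact charF_imp_of_mem (hu.1 hφu) hφu

theorem charF_imp_box_plus_loebBoxes (hu : IsAtomOver (extClosure Γ₀) u) {E : MTrm A P}
    (hL : ∀ η ∈ loebBoxes Γ₀, ∃ χ, η = box E.plus χ) :
    MProof ((charF (extClosure Γ₀) u).imp (box E.plus (conjL (u ∩ loebBoxes Γ₀).toList))) := by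
  refine imp_box_conjL fun η hη => ?_
  obtain ⟨hηu, hηL⟩ := Finset.mem_inter.1 (Finset.mem_toList.1 hη)
  obtain ⟨χ, rfl⟩ := hL η hηL
  exact (charF_imp_of_mem (hu.1 hηu) hηu).imp_trans (box_plus_imp_box_plus_box_plus _ _)

/-- The atom `t` is obtained from `⟨E⁺⟩((ξ ∧ [E⁺]¬ξ) ∧ ⋀(u ∩ loebBoxes))`, with
`ξ = ¬ψ ∧ ⋀(boxTargets a u)` and `[E⁺]¬ξ` the Löb box that `u` refutes. -/
theorem exists_witness (hΓ₀ : FLClosed Γ₀) (hu : IsAtomOver (extClosure Γ₀) u) {a : A}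
    {ψ : MFml A P} (hψ : box (.tv a) ψ ∈ Γ₀) (hn : box (.tv a) ψ ∉ u) :
    ∃ t, IsAtomOver (extClosure Γ₀) t ∧ rank Γ₀ u < rank Γ₀ t ∧ boxTargets Γ₀ a u ⊆ t ∧ ψ ∉ t := by
  obtain ⟨E, hE, hloeb_mem, hloeb_shape⟩ := exists_term_loebBoxes hψ
  set X := boxTargets Γ₀ a u
  set ξ := ψ.neg.and (conjL X.toList)
  set D := u ∩ loebBoxes Γ₀
  have hloeb : loebBox E X ψ ∈ loebBoxes Γ₀ :=
    hloeb_mem X (Finset.filter_subset _ _) ψ (hΓ₀.box_target hψ)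
  have hrefute := charF_imp_not_loebBox hu hE hψ hn
  have hnew : loebBox E X ψ ∉ u :=
    notMem_of_consistent hu.2 (imp_self _) (Finset.mem_union_right _ hloeb) hrefute
  have hD := charF_imp_box_plus_loebBoxes hu hloeb_shape
  set δ := (ξ.and (loebBox E X ψ)).and (conjL D.toList)
  obtain ⟨t, ht, hδt⟩ := exists_isAtomOver_of_consistent_and_dia (Γ := extClosure Γ₀) (δ := δ)
    (hu.2.mono (imp_and (imp_self _)
      (imp_dia_and (hrefute.imp_trans (dia_plus_imp_dia_plus_and_box_plus_neg _ _)) hD)))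
  have hmem : ∀ {θ}, θ ∈ extClosure Γ₀ → MProof (δ.imp θ) → θ ∈ t := fun hθ h =>
    mem_of_consistent hδt (and_right _ _) hθ ((and_left _ _).imp_trans h)
  have hξ : MProof (δ.imp ξ) := (and_left _ _).imp_trans (and_left _ _)
  have hDt : D ⊆ t ∩ loebBoxes Γ₀ := fun η hη => Finset.mem_inter.2
    ⟨hmem (hu.1 (Finset.mem_inter.1 hη).1)
      ((and_right _ _).imp_trans (conjL_imp_of_mem (Finset.mem_toList.2 hη))),
      (Finset.mem_inter.1 hη).2⟩
  have hloeb_t : loebBox E X ψ ∈ t :=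
    hmem (Finset.mem_union_right _ hloeb) ((and_left _ _).imp_trans (and_right _ _))
  have hX : X ⊆ t := fun φ hφ => hmem (subset_extClosure Γ₀ (Finset.mem_filter.1 hφ).1)
    (hξ.imp_trans ((and_right _ _).imp_trans (conjL_imp_of_mem (Finset.mem_toList.2 hφ))))
  have hψt : ψ ∉ t := notMem_of_consistent hδt (and_right _ _)
    (subset_extClosure Γ₀ (hΓ₀.box_target hψ))
    ((and_left _ _).imp_trans (hξ.imp_trans (and_left _ _)))
  refine ⟨t, ht, Finset.card_lt_card ((Finset.ssubset_iff_of_subset hDt).2 ?_), hX, hψt⟩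
  exact ⟨_, Finset.mem_inter.2 ⟨hloeb_t, hloeb⟩, fun h => hnew (Finset.mem_inter.1 h).1⟩

end Canonical

section TruthLemma

open MProof

variable [DecidableEq (MFml A P)] {Γ₀ : Finset (MFml A P)}

mutual

theorem mem_iff_msemF (hΓ₀ : FLClosed Γ₀) :
    ∀ φ ∈ Γ₀, ∀ u : World Γ₀, φ ∈ u.1 ↔ msemF (canonical Γ₀) φ u
  | .pv _, _, _ => Iff.rfl
  | .fls, h, u => ⟨u.2.fls_notMem (subset_extClosure Γ₀ h), False.elim⟩
  | .imp φ ψ, h, u => by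
    rw [u.2.mem_iff_imp_of_provable (subset_extClosure Γ₀ h)
      (subset_extClosure Γ₀ (hΓ₀.imp_left h)) (subset_extClosure Γ₀ (hΓ₀.imp_right h))
      (iff_refl _), mem_iff_msemF hΓ₀ φ (hΓ₀.imp_left h) u,
      mem_iff_msemF hΓ₀ ψ (hΓ₀.imp_right h) u]
    rfl
  | .box e ψ, h, u => by
    rw [box_mem_iff hΓ₀ e ψ h u]
    simp only [msemF, mem_iff_msemF hΓ₀ ψ (hΓ₀.box_target h)]

theorem box_mem_iff (hΓ₀ : FLClosed Γ₀) : ∀ (e : MTrm A P) (ψ : MFml A P), box e ψ ∈ Γ₀ →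
    ∀ u : World Γ₀, box e ψ ∈ u.1 ↔ ∀ t, msemT (canonical Γ₀) e u t → ψ ∈ t.1
  | .tv a, ψ, h, u => by
    refine ⟨fun hu t ht => ht.2 (Finset.mem_filter.2 ⟨hΓ₀.box_target h, hu⟩),
      fun H => by_contra fun hn => ?_⟩
    obtain ⟨t, ht, hrank, htargets, hψt⟩ := exists_witness hΓ₀ u.2 h hn
    exact hψt (H ⟨t, ht⟩ ⟨Prod.Lex.lt_iff.2 (.inl hrank), htargets⟩)
  | .comp e f, ψ, h, u => by
    rw [u.2.mem_iff_of_provable (subset_extClosure Γ₀ h) (subset_extClosure Γ₀ (hΓ₀.comp h))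
      (compAx e f ψ), box_mem_iff hΓ₀ e _ (hΓ₀.comp h) u]
    simp only [msemT, box_mem_iff hΓ₀ f ψ (hΓ₀.box_target (hΓ₀.comp h)), forall_exists_index,
      and_imp]
    exact ⟨fun H t m hm ht => H m hm t ht, fun H m hm t ht => H t m hm ht⟩
  | .union e f, ψ, h, u => by
    rw [u.2.mem_iff_and_of_provable (subset_extClosure Γ₀ h)
      (subset_extClosure Γ₀ (hΓ₀.union_left h)) (subset_extClosure Γ₀ (hΓ₀.union_right h))
      (unionAx e f ψ), box_mem_iff hΓ₀ e ψ (hΓ₀.union_left h) u,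
      box_mem_iff hΓ₀ f ψ (hΓ₀.union_right h) u]
    simp only [msemT, or_imp, forall_and]
  | .plus e, ψ, h, u => by
    have : Nonempty (World Γ₀) := ⟨u⟩
    induction u using (sFinLin_canonical Γ₀).wellFounded.induction with
    | _ u ih =>
      rw [u.2.mem_iff_and_of_provable (subset_extClosure Γ₀ h)
        (subset_extClosure Γ₀ (hΓ₀.plus_base h)) (subset_extClosure Γ₀ (hΓ₀.plus_step h))
        (plusAx e ψ), box_mem_iff hΓ₀ e ψ (hΓ₀.plus_base h) u,
        box_mem_iff hΓ₀ e _ (hΓ₀.plus_step h) u]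
      simp only [msemT]
      rw [Relation.forall_transGen_iff]
      exact and_congr_right' (forall₂_congr fun m hm =>
        ih m (msemT_sub_U (fun _ _ _ => lt_trans) e hm))
  | .testL χ e, ψ, h, u => by
    rw [u.2.mem_iff_imp_of_provable (subset_extClosure Γ₀ h)
      (subset_extClosure Γ₀ (hΓ₀.testL_test h)) (subset_extClosure Γ₀ (hΓ₀.testL_box h))
      (testLAx χ e ψ), mem_iff_msemF hΓ₀ χ (hΓ₀.testL_test h) u,
      box_mem_iff hΓ₀ e ψ (hΓ₀.testL_box h) u]
    simp only [msemT, and_imp, imp_forall_iff]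
  | .testR e χ, ψ, h, u => by
    have h₁ := hΓ₀.testR h
    have h₂ := hΓ₀.box_target h₁
    rw [u.2.mem_iff_of_provable (subset_extClosure Γ₀ h) (subset_extClosure Γ₀ h₁)
      (testRAx e χ ψ), box_mem_iff hΓ₀ e _ h₁ u]
    simp only [msemT, and_imp, fun t : World Γ₀ => t.2.mem_iff_imp_of_provable
      (subset_extClosure Γ₀ h₂) (subset_extClosure Γ₀ (hΓ₀.imp_left h₂))
      (subset_extClosure Γ₀ (hΓ₀.imp_right h₂)) (iff_refl _),
      mem_iff_msemF hΓ₀ χ (hΓ₀.imp_left h₂)]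

end

theorem exists_world_notMem {φ : MFml A P} (hφ : φ ∈ Γ₀) (h : ¬ MProof φ) :
    ∃ u : World Γ₀, φ ∉ u.1 := by
  have hc : φ.neg.Consistent := fun h' => h (h'.mp (of_tautology fun _ => by
    simp only [MFml.eval_toProp_imp, MFml.eval_toProp_neg]; tauto))
  obtain ⟨s, hs, hcon⟩ := exists_isAtomOver_of_consistent (Γ := extClosure Γ₀) hc
  exact ⟨⟨s, hs⟩,
    notMem_of_consistent hcon (and_right _ _) (subset_extClosure Γ₀ hφ) (and_left _ _)⟩

end TruthLemma

theorem identity_free_pdl_completeness {A P : Type} (φ : MFml A P) :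
    (∀ (W : Type) (S : GStruct A P W), SFinLin S → ∀ x : W, msemF S φ x) ↔ MProof φ := by
  classical
  refine ⟨fun hvalid => by_contra fun hφ => ?_, fun h _ _ hS => h.sound hS⟩
  obtain ⟨u, hu⟩ := exists_world_notMem (self_mem_clF φ) hφ
  have : Nonempty (World (clF φ)) := ⟨u⟩
  exact hu ((mem_iff_msemF (flClosed_clF φ) φ (self_mem_clF φ) u).2
    (hvalid _ _ (sFinLin_canonical _) u))
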